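/- Let E be a homogeneous Moran set with equal ratios c_{k,1} = ⋯ = c_{k,n_k} = c_k at each level and c_* = inf_k c_k > 0. Then dim_A E = lim_{m→∞} sup_k [log(n_k ⋯ n_{k+m}) / (−log(c_k ⋯ c_{k+m}))]. -/

import Mathlib

open Finset Set Metric

/-- A word `v` is valid starting at level `start`. -/
def ValidFrom (n : ℕ → ℕ) (start : ℕ) (v : List ℕ) : Prop :=
  ∀ i, i < v.length → v.getD i 0 < n (start + i)

/-- `wt c start v` : the ratio `c_v` of a word `v` starting at level `start`. -/
noncomputable def wt (c : ℕ → ℕ → ℝ) (start : ℕ) (v : List ℕ) : ℝ :=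
  ∏ i ∈ Finset.range v.length, c (start + i) (v.getD i 0)

/-- A Moran structure in `ℝ^d`: branching numbers `n k ≥ 2`, ratio vectors
`(c k 0, …, c k (n k - 1))` with `∑_j (c k j)^d ≤ 1`, and basic sets `J u`
satisfying the Moran structure conditions (MSC). -/
structure MoranSystem (d : ℕ) where
  n : ℕ → ℕ
  c : ℕ → ℕ → ℝ
  J : List ℕ → Set (EuclideanSpace ℝ (Fin d))
  hn : ∀ k, 2 ≤ n k
  hc : ∀ k j, j < n k → c k j ∈ Set.Ioo (0 : ℝ) 1
  hsum : ∀ k, ∑ j ∈ Finset.range (n k), (c k j) ^ d ≤ 1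
  hcompact : ∀ u, IsCompact (J u)
  hint : (interior (J [])).Nonempty
  hsimilar : ∀ u : List ℕ, ValidFrom n 0 u →
    ∃ (f : EuclideanSpace ℝ (Fin d) → EuclideanSpace ℝ (Fin d)) (r : ℝ), 0 < r ∧
      (∀ x y, dist (f x) (f y) = r * dist x y) ∧ J u = f '' J []
  hsubset : ∀ u : List ℕ, ∀ j, ValidFrom n 0 u → j < n u.length →
    J (u ++ [j]) ⊆ J u
  hdisj : ∀ u : List ℕ, ∀ j j', ValidFrom n 0 u → j < n u.length → j' < n u.length →
    j ≠ j' → interior (J (u ++ [j])) ∩ interior (J (u ++ [j'])) = ∅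
  hratio : ∀ u : List ℕ, ∀ j, ValidFrom n 0 u → j < n u.length →
    Metric.diam (J (u ++ [j])) = c u.length j * Metric.diam (J u)

/-- The Moran set `E = ⋂_k ⋃_{u ∈ D_k} J_u`. -/
def MoranSystem.moranSet {d : ℕ} (M : MoranSystem d) : Set (EuclideanSpace ℝ (Fin d)) :=
  ⋂ k : ℕ, ⋃ u ∈ {u : List ℕ | u.length = k ∧ ValidFrom M.n 0 u}, M.J u

/-- The smallest number of closed `r`-balls needed to cover `B(x,R) ∩ K` for any `x ∈ K`. -/
noncomputable def coverNum {X : Type*} [MetricSpace X] (K : Set X) (r R : ℝ) : ℕ :=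
  sInf {m : ℕ | ∀ x ∈ K, ∃ t : Finset X, t.card ≤ m ∧
    closedBall x R ∩ K ⊆ ⋃ y ∈ t, closedBall y r}

/-- The Assouad dimension of a subset of a metric space. -/
noncomputable def assouadDim {X : Type*} [MetricSpace X] (K : Set X) : ℝ :=
  sInf {α : ℝ | 0 ≤ α ∧ ∃ b C : ℝ, 0 < b ∧ 0 < C ∧ ∀ r R : ℝ, 0 < r → r < R → R < b →
    (coverNum K r R : ℝ) ≤ C * (R / r) ^ α}

/-!
Put `a i = log (n i)` and `t i = -log (c i)`. The quantity under the limit is the largest ratio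
`(∑ a) / (∑ t)` over windows of `m + 1` consecutive levels; cutting a long window into windows of
length `m₀ + 1` shows that these maxima converge to their infimum `s`.

Given scales `r < R`, let `k ≤ l` be the levels whose basic sets have diameter comparable to `R`
and `r` (this is where `c_* > 0` enters). By a volume count, a ball of radius `R` meets boundedly
many basic sets of level `k`, and a ball of radius `r` boundedly many of level `l`, so the number
of `r`-balls needed to cover `B(x, R) ∩ E` is comparable to `n_k ⋯ n_{l-1}`. Cutting `[k, l)` into
windows of length `m₀ + 1` bounds `log (n_k ⋯ n_{l-1})` by `s_{m₀} · log (R / r)` plus a constant,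
whence `dim_A E ≤ s`. Conversely, long windows of ratio close to `s`, trimmed so that they start
at small scales, give `dim_A E ≥ s`.
-/

open Filter Topology MeasureTheory Module Real
open scoped ENNReal

noncomputable def windowRatio (a t : ℕ → ℝ) (k l : ℕ) : ℝ :=
  (∑ i ∈ Ico k l, a i) / ∑ i ∈ Ico k l, t i

noncomputable def maxWindowRatio (a t : ℕ → ℝ) (m : ℕ) : ℝ :=
  ⨆ k, windowRatio a t k (k + m + 1)

structure RatioBounds (a t : ℕ → ℝ) (D τ₀ τ₁ : ℝ) : Prop where
  τ₀_pos : 0 < τ₀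
  a_nonneg : ∀ i, 0 ≤ a i
  a_le : ∀ i, a i ≤ D * t i
  le_t : ∀ i, τ₀ ≤ t i
  t_le : ∀ i, t i ≤ τ₁

namespace RatioBounds

variable {a t : ℕ → ℝ} {D τ₀ τ₁ : ℝ} (H : RatioBounds a t D τ₀ τ₁)
include H

lemma t_pos (i : ℕ) : 0 < t i := H.τ₀_pos.trans_le (H.le_t i)

lemma D_nonneg : 0 ≤ D :=
  nonneg_of_mul_nonneg_left ((H.a_nonneg 0).trans (H.a_le 0)) (H.t_pos 0)

lemma τ₁_pos : 0 < τ₁ := (H.t_pos 0).trans_le (H.t_le 0)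

lemma mul_le_sum_t (k l : ℕ) : ((l - k : ℕ) : ℝ) * τ₀ ≤ ∑ i ∈ Ico k l, t i := by
  simpa using card_nsmul_le_sum (Ico k l) t τ₀ fun i _ => H.le_t i

lemma sum_t_le_mul (k l : ℕ) : ∑ i ∈ Ico k l, t i ≤ ((l - k : ℕ) : ℝ) * τ₁ := by
  simpa using sum_le_card_nsmul (Ico k l) t τ₁ fun i _ => H.t_le i

lemma sum_t_nonneg (k l : ℕ) : 0 ≤ ∑ i ∈ Ico k l, t i :=
  sum_nonneg fun i _ => (H.t_pos i).le

lemma sum_t_pos {k l : ℕ} (h : k < l) : 0 < ∑ i ∈ Ico k l, t i :=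
  sum_pos (fun i _ => H.t_pos i) (nonempty_Ico.2 h)

lemma sum_a_le (k l : ℕ) : ∑ i ∈ Ico k l, a i ≤ D * ∑ i ∈ Ico k l, t i := by
  rw [mul_sum]
  exact sum_le_sum fun i _ => H.a_le i

lemma windowRatio_nonneg (k l : ℕ) : 0 ≤ windowRatio a t k l :=
  div_nonneg (sum_nonneg fun i _ => H.a_nonneg i) (H.sum_t_nonneg k l)

lemma windowRatio_le (k l : ℕ) : windowRatio a t k l ≤ D :=
  div_le_of_le_mul₀ (H.sum_t_nonneg k l) H.D_nonneg (H.sum_a_le k l)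

lemma windowRatio_le_maxWindowRatio (k m : ℕ) :
    windowRatio a t k (k + m + 1) ≤ maxWindowRatio a t m :=
  le_ciSup (f := fun k => windowRatio a t k (k + m + 1))
    ⟨D, by rintro _ ⟨k, rfl⟩; exact H.windowRatio_le _ _⟩ k

lemma maxWindowRatio_nonneg (m : ℕ) : 0 ≤ maxWindowRatio a t m :=
  (H.windowRatio_nonneg 0 _).trans (H.windowRatio_le_maxWindowRatio 0 m)

lemma sum_a_le_maxWindowRatio_mul (k m : ℕ) :
    ∑ i ∈ Ico k (k + m + 1), a i ≤ maxWindowRatio a t m * ∑ i ∈ Ico k (k + m + 1), t i :=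
  (div_le_iff₀ (H.sum_t_pos (by omega))).1 (H.windowRatio_le_maxWindowRatio k m)

lemma sum_a_le_maxWindowRatio_mul_add (m n k : ℕ) :
    ∑ i ∈ Ico k (k + n), a i
      ≤ maxWindowRatio a t m * ∑ i ∈ Ico k (k + n), t i + D * (m + 1) * τ₁ := by
  induction n using Nat.strong_induction_on generalizing k with
  | _ n IH =>
    rcases le_or_gt n (m + 1) with hn | hn
    · have hlen : ((k + n - k : ℕ) : ℝ) ≤ m + 1 := by
        rw [Nat.add_sub_cancel_left]; exact_mod_cast hn
      have := mul_le_mul_of_nonneg_left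
        ((H.sum_t_le_mul k (k + n)).trans (mul_le_mul_of_nonneg_right hlen H.τ₁_pos.le))
        H.D_nonneg
      nlinarith [H.sum_a_le k (k + n), H.maxWindowRatio_nonneg m, H.sum_t_nonneg k (k + n)]
    · obtain ⟨n', rfl⟩ : ∃ n', n = m + 1 + n' := ⟨n - (m + 1), by omega⟩
      have hrest := IH n' (by omega) (k + m + 1)
      rw [show k + m + 1 + n' = k + (m + 1 + n') by ring] at hrest
      rw [← sum_Ico_consecutive a (show k ≤ k + m + 1 by omega) (by omega),
        ← sum_Ico_consecutive t (show k ≤ k + m + 1 by omega) (by omega)]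
      nlinarith [H.sum_a_le_maxWindowRatio_mul k m]

lemma maxWindowRatio_le_add (m₀ m : ℕ) :
    maxWindowRatio a t m ≤ maxWindowRatio a t m₀ + D * (m₀ + 1) * τ₁ / τ₀ / (m + 1) := by
  refine ciSup_le fun k => ?_
  set B := D * (m₀ + 1) * τ₁
  have hT := H.mul_le_sum_t k (k + m + 1)
  rw [show k + m + 1 - k = m + 1 by omega, Nat.cast_succ] at hT
  have hB : B ≤ B / τ₀ / (m + 1) * ∑ i ∈ Ico k (k + m + 1), t i := by
    have := H.τ₀_pos
    rw [div_div, div_mul_eq_mul_div, le_div_iff₀ (by positivity)]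
    exact mul_le_mul_of_nonneg_left (by linarith)
      (mul_nonneg (mul_nonneg H.D_nonneg (by positivity)) H.τ₁_pos.le)
  rw [windowRatio, div_le_iff₀ (H.sum_t_pos (by omega)), add_mul]
  have := H.sum_a_le_maxWindowRatio_mul_add m₀ (m + 1) k
  rw [← add_assoc] at this
  linarith

lemma bddBelow_range_maxWindowRatio : BddBelow (range (maxWindowRatio a t)) :=
  ⟨0, by rintro _ ⟨m, rfl⟩; exact H.maxWindowRatio_nonneg m⟩

theorem tendsto_maxWindowRatio :
    Tendsto (maxWindowRatio a t) atTop (𝓝 (⨅ m, maxWindowRatio a t m)) := by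
  refine tendsto_order.2 ⟨fun b hb => Eventually.of_forall fun m =>
    hb.trans_le (ciInf_le H.bddBelow_range_maxWindowRatio m), fun b hb => ?_⟩
  obtain ⟨m₀, hm₀⟩ := exists_lt_of_ciInf_lt hb
  have hlim : Tendsto (fun m : ℕ => maxWindowRatio a t m₀ + D * (m₀ + 1) * τ₁ / τ₀ / (m + 1))
      atTop (𝓝 (maxWindowRatio a t m₀ + 0)) := by
    refine tendsto_const_nhds.add ?_
    simpa [div_eq_mul_one_div (D * (m₀ + 1) * τ₁ / τ₀)] using
      tendsto_one_div_add_atTop_nhds_zero_nat.const_mul (D * (m₀ + 1) * τ₁ / τ₀)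
  filter_upwards [(tendsto_order.1 hlim).2 b (by simpa using hm₀)] with m hm
  exact (H.maxWindowRatio_le_add m₀ m).trans_lt hm

lemma windowRatio_sub_le {k K l : ℕ} (hkK : k ≤ K) (hKl : K < l) :
    windowRatio a t k l - D * (∑ i ∈ Ico k K, t i) / ∑ i ∈ Ico K l, t i
      ≤ windowRatio a t K l := by
  have hS : windowRatio a t k l * ∑ i ∈ Ico k l, t i = ∑ i ∈ Ico k l, a i :=
    div_mul_cancel₀ _ (H.sum_t_pos (hkK.trans_lt hKl)).ne'
  rw [← sum_Ico_consecutive t hkK hKl.le, ← sum_Ico_consecutive a hkK hKl.le] at hS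
  rw [sub_le_iff_le_add, show windowRatio a t K l = _ / _ from rfl, ← add_div,
    le_div_iff₀ (H.sum_t_pos hKl)]
  nlinarith [H.sum_a_le k K, H.windowRatio_nonneg k l, H.sum_t_nonneg k K]

theorem exists_lt_windowRatio {s : ℝ} (hs : s < ⨅ m, maxWindowRatio a t m) (K L : ℕ) :
    ∃ k l, K ≤ k ∧ k + L ≤ l ∧ s < windowRatio a t k l := by
  set ε := (⨅ m, maxWindowRatio a t m) - s
  have hε : 0 < ε := sub_pos.2 hs
  obtain ⟨N, hN⟩ := exists_nat_gt (D * K * τ₁ / (τ₀ * (ε / 2)))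
  set m := K + L + N
  obtain ⟨k, hk⟩ : ∃ k, s + ε / 2 < windowRatio a t k (k + m + 1) := by
    refine exists_lt_of_lt_ciSup (?_ : s + ε / 2 < maxWindowRatio a t m)
    linarith [ciInf_le H.bddBelow_range_maxWindowRatio m]
  refine ⟨max k K, k + m + 1, le_max_right _ _, by omega, ?_⟩
  have htrim := H.windowRatio_sub_le (le_max_left k K) (show max k K < k + m + 1 by omega)
  have hhead : ∑ i ∈ Ico k (max k K), t i ≤ K * τ₁ :=
    (H.sum_t_le_mul _ _).trans (mul_le_mul_of_nonneg_right (by norm_cast; omega) H.τ₁_pos.le)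
  have htail : (N + 1) * τ₀ ≤ ∑ i ∈ Ico (max k K) (k + m + 1), t i :=
    le_trans (mul_le_mul_of_nonneg_right (by norm_cast; omega) H.τ₀_pos.le) (H.mul_le_sum_t _ _)
  have hNτ : D * K * τ₁ < (N + 1) * τ₀ * (ε / 2) := by
    rw [div_lt_iff₀ (by have := H.τ₀_pos; positivity)] at hN
    nlinarith [H.τ₀_pos]
  have herr : D * (∑ i ∈ Ico k (max k K), t i) / ∑ i ∈ Ico (max k K) (k + m + 1), t i < ε / 2 := by
    rw [div_lt_iff₀ (htail.trans_lt' (by have := H.τ₀_pos; positivity))]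
    nlinarith [mul_le_mul_of_nonneg_left hhead H.D_nonneg]
  linarith

end RatioBounds

section Packing

variable {E : Type*} [NormedAddCommGroup E] [NormedSpace ℝ E] [FiniteDimensional ℝ E]
  [MeasurableSpace E] [BorelSpace E]

theorem card_mul_pow_le_of_pairwiseDisjoint_ball {ι : Type*} {s : Finset ι} {z : ι → E} {y : E}
    {a b : ℝ} (ha : 0 < a) (hb : 0 < b)
    (hdisj : (s : Set ι).PairwiseDisjoint fun i => ball (z i) a)
    (hsub : ∀ i ∈ s, ball (z i) a ⊆ ball y b) :
    (s.card : ℝ) * a ^ finrank ℝ E ≤ b ^ finrank ℝ E := by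
  let μ : Measure E := Measure.addHaar
  have h : (s.card : ℝ≥0∞) * ENNReal.ofReal (a ^ finrank ℝ E) * μ (ball 0 1)
      ≤ ENNReal.ofReal (b ^ finrank ℝ E) * μ (ball 0 1) := by
    calc _ = ∑ i ∈ s, μ (ball (z i) a) := by
          rw [sum_congr rfl fun i _ => Measure.addHaar_ball_of_pos μ _ ha, sum_const,
            nsmul_eq_mul, mul_assoc]
      _ = μ (⋃ i ∈ s, ball (z i) a) :=
          (measure_biUnion_finset hdisj fun i _ => measurableSet_ball).symm
      _ ≤ μ (ball y b) := measure_mono (iUnion₂_subset hsub)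
      _ = _ := Measure.addHaar_ball_of_pos μ y hb
  rwa [ENNReal.mul_le_mul_iff_left (measure_ball_pos μ 0 one_pos).ne' measure_ball_lt_top.ne,
    ← ENNReal.ofReal_natCast, ← ENNReal.ofReal_mul (by positivity),
    ENNReal.ofReal_le_ofReal_iff (by positivity)] at h

theorem card_mul_pow_le_of_pairwiseDisjoint_interior {ι : Type*} {s : Finset ι} {V : ι → Set E}
    {z : ι → E} {y : E} {a Δ R : ℝ} (ha : 0 < a) (hΔ : 0 ≤ Δ) (hR : 0 ≤ R)
    (hdisj : (s : Set ι).PairwiseDisjoint fun i => interior (V i))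
    (hball : ∀ i ∈ s, ball (z i) a ⊆ V i) (hmeet : ∀ i ∈ s, (V i ∩ closedBall y R).Nonempty)
    (hbdd : ∀ i ∈ s, Bornology.IsBounded (V i)) (hdiam : ∀ i ∈ s, diam (V i) ≤ Δ) :
    (s.card : ℝ) * a ^ finrank ℝ E ≤ (R + Δ + a) ^ finrank ℝ E := by
  have hint : ∀ i ∈ s, ball (z i) a ⊆ interior (V i) :=
    fun i hi => interior_maximal (hball i hi) isOpen_ball
  refine card_mul_pow_le_of_pairwiseDisjoint_ball (y := y) ha (by positivity)
    (hdisj.mono_on fun i hi => hint i hi) fun i hi w hw => ?_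
  obtain ⟨p, hpV, hpB⟩ := hmeet i hi
  have hzp : dist (z i) p ≤ Δ :=
    (dist_le_diam_of_mem (hbdd i hi) (hball i hi (mem_ball_self ha)) hpV).trans (hdiam i hi)
  have := dist_triangle4 w (z i) p y
  rw [mem_ball] at hw ⊢
  linarith [mem_closedBall.1 hpB]

end Packing

section Similarity

variable {E : Type*} [NormedAddCommGroup E] [InnerProductSpace ℝ E] [FiniteDimensional ℝ E]
  {f : E → E} {r : ℝ}

/-- `r⁻¹ • f` is an isometry, hence affine by Mazur–Ulam, hence onto in finite dimension. -/
theorem surjective_of_dist_eq_mul (hr : 0 < r) (hf : ∀ x y, dist (f x) (f y) = r * dist x y) :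
    Function.Surjective f := by
  have hg : Isometry fun x => r⁻¹ • f x := Isometry.of_dist_eq fun x y => by
    rw [dist_smul₀, hf, Real.norm_of_nonneg (inv_nonneg.2 hr.le), inv_mul_cancel_left₀ hr.ne']
  let A := hg.affineIsometryOfStrictConvexSpace
  have hA : Function.Surjective A := by
    have : Function.Surjective A.linear :=
      LinearMap.injective_iff_surjective.1 A.linearIsometry.injective
    exact (A.toAffineMap.linear_surjective_iff).1 this
  intro y
  obtain ⟨x, hx⟩ := hA (r⁻¹ • y)
  exact ⟨x, by simpa [A, hr.ne'] using hx⟩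

theorem ball_subset_image_ball_of_dist_eq_mul (hr : 0 < r)
    (hf : ∀ x y, dist (f x) (f y) = r * dist x y) (z : E) (ρ : ℝ) :
    ball (f z) (r * ρ) ⊆ f '' ball z ρ := by
  intro w hw
  obtain ⟨x, rfl⟩ := surjective_of_dist_eq_mul hr hf w
  rw [mem_ball, hf, mul_lt_mul_iff_right₀ hr] at hw
  exact ⟨x, hw, rfl⟩

end Similarity

section Words

variable {n : ℕ → ℕ} {s : ℕ}

theorem validFrom_append_singleton {w : List ℕ} {j : ℕ} :
    ValidFrom n s (w ++ [j]) ↔ ValidFrom n s w ∧ j < n (s + w.length) := by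
  refine ⟨fun h => ⟨fun i hi => ?_, ?_⟩, fun ⟨hw, hj⟩ i hi => ?_⟩
  · have := h i (by simp; omega)
    rwa [List.getD_append _ _ _ _ hi] at this
  · simpa using h w.length (by simp)
  · rcases lt_or_eq_of_le (Nat.lt_succ_iff.1 (by simpa using hi)) with hi | rfl
    · rw [List.getD_append _ _ _ _ hi]
      exact hw i hi
    · simpa using hj

theorem ValidFrom.take {u : List ℕ} (h : ValidFrom n s u) (k : ℕ) : ValidFrom n s (u.take k) :=
  fun i hi => by
    rw [List.length_take] at hi
    simpa [List.getD_eq_getElem?_getD, List.getElem?_take, lt_of_lt_of_le hi (min_le_left _ _)]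
      using h i (lt_of_lt_of_le hi (min_le_right _ _))

theorem ValidFrom.append_replicate_zero {u : List ℕ} (h : ValidFrom n s u) (hn : ∀ i, 0 < n i)
    (m : ℕ) : ValidFrom n s (u ++ List.replicate m 0) := by
  induction m with
  | zero => simpa using h
  | succ m ih =>
    rw [List.replicate_succ', ← List.append_assoc]
    exact validFrom_append_singleton.2 ⟨ih, hn _⟩

end Words

noncomputable def levelScale (cr : ℕ → ℝ) (k : ℕ) : ℝ := ∏ i ∈ range k, cr i

theorem levelScale_mul_prod_Ico (cr : ℕ → ℝ) {k l : ℕ} (h : k ≤ l) :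
    levelScale cr k * ∏ i ∈ Ico k l, cr i = levelScale cr l :=
  prod_range_mul_prod_Ico cr h

theorem tendsto_levelScale_of_le_neg_log {cr : ℕ → ℝ} {τ : ℝ} (hτ : 0 < τ) (hpos : ∀ i, 0 < cr i)
    (hle : ∀ i, τ ≤ -log (cr i)) : Tendsto (levelScale cr) atTop (𝓝 0) := by
  have hbound : ∀ k, levelScale cr k ≤ exp (-τ) ^ k := fun k => calc
    levelScale cr k ≤ ∏ _i ∈ range k, exp (-τ) := prod_le_prod (fun i _ => (hpos i).le) fun i _ =>
        (log_le_iff_le_exp (hpos i)).1 (by linarith [hle i])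
    _ = exp (-τ) ^ k := by simp
  exact squeeze_zero (fun k => (prod_pos fun i _ => hpos i).le) hbound
    (tendsto_pow_atTop_nhds_zero_of_lt_one (exp_pos _).le (exp_lt_one_iff.2 (by linarith)))

theorem exists_finset_card_le_coverNum {X : Type*} [MetricSpace X] {K : Set X} (hK : IsCompact K)
    {r : ℝ} (hr : 0 < r) (R : ℝ) {x : X} (hx : x ∈ K) :
    ∃ t : Finset X, t.card ≤ coverNum K r R ∧ closedBall x R ∩ K ⊆ ⋃ y ∈ t, closedBall y r := by
  refine Nat.sInf_mem (s := {m : ℕ | ∀ x ∈ K, ∃ t : Finset X, t.card ≤ m ∧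
    closedBall x R ∩ K ⊆ ⋃ y ∈ t, closedBall y r}) ?_ x hx
  obtain ⟨t, -, ht, hcover⟩ := finite_cover_balls_of_compact hK hr
  refine ⟨ht.toFinset.card, fun _ _ => ⟨ht.toFinset, le_rfl, fun e he => ?_⟩⟩
  obtain ⟨y, hy, hey⟩ := mem_iUnion₂.1 (hcover he.2)
  exact mem_iUnion₂.2 ⟨y, ht.mem_toFinset.2 hy, ball_subset_closedBall hey⟩

namespace MoranSystem

variable {d : ℕ}

lemma one_le_dim (M : MoranSystem d) : 1 ≤ d := by
  refine Nat.one_le_iff_ne_zero.2 fun hd => ?_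
  -- for `d = 0`, `hsum` says `n 0 ≤ 1`
  have h := M.hsum 0
  subst hd
  simp only [pow_zero, sum_const, card_range, nsmul_eq_mul, mul_one, Nat.cast_le_one] at h
  exact absurd (M.hn 0) (by omega)

def descendants (M : MoranSystem d) (u : List ℕ) : ℕ → Finset (List ℕ)
  | 0 => {u}
  | m + 1 => (M.descendants u m).biUnion fun v =>
      (range (M.n (u.length + m))).image fun j => v ++ [j]

variable (M : MoranSystem d)

lemma n_pos (k : ℕ) : 0 < M.n k := lt_of_lt_of_le two_pos (M.hn k)

lemma J_subset_take {u : List ℕ} (hu : ValidFrom M.n 0 u) (k : ℕ) : M.J u ⊆ M.J (u.take k) := by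
  induction u using List.reverseRecOn with
  | nil => simp
  | append_singleton w j ih =>
    obtain ⟨hw, hj⟩ := validFrom_append_singleton.1 hu
    rcases le_or_gt k w.length with h | h
    · rw [List.take_append_of_le_length h]
      exact (M.hsubset w j hw (by simpa using hj)).trans (ih hw)
    · rw [List.take_of_length_le (by simp; omega)]

lemma J_nonempty {u : List ℕ} (hu : ValidFrom M.n 0 u) : (M.J u).Nonempty := by
  obtain ⟨f, r, -, -, hJ⟩ := M.hsimilar u hu
  obtain ⟨z, hz⟩ := M.hint
  exact ⟨f z, hJ ▸ mem_image_of_mem f (interior_subset hz)⟩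

lemma disjoint_interior_J {u v : List ℕ} (hu : ValidFrom M.n 0 u) (hv : ValidFrom M.n 0 v)
    (hlen : u.length = v.length) (huv : u ≠ v) :
    Disjoint (interior (M.J u)) (interior (M.J v)) := by
  induction u using List.reverseRecOn generalizing v with
  | nil => exact absurd (List.length_eq_zero_iff.1 hlen.symm).symm huv
  | append_singleton w a ih =>
    obtain rfl | ⟨w', b, rfl⟩ := List.eq_nil_or_concat v
    · simp at hlen
    rw [List.concat_eq_append] at hv huv hlen ⊢
    obtain ⟨hw, ha⟩ := validFrom_append_singleton.1 hu
    obtain ⟨hw', hb⟩ := validFrom_append_singleton.1 hv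
    simp only [List.length_append, List.length_singleton, add_left_inj] at hlen
    by_cases hww : w = w'
    · subst hww
      exact disjoint_iff_inter_eq_empty.2 <| M.hdisj w a b hw (by simpa using ha)
        (by simpa using hb) fun hab => huv (hab ▸ rfl)
    · exact (ih hw hw' hlen hww).mono (interior_mono (M.hsubset w a hw (by simpa using ha)))
        (interior_mono (M.hsubset w' b hw' (by simpa using hb)))

theorem mem_descendants {u : List ℕ} (hu : ValidFrom M.n 0 u) {m : ℕ} {v : List ℕ} :
    v ∈ M.descendants u m ↔
      v.length = u.length + m ∧ ValidFrom M.n 0 v ∧ v.take u.length = u := by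
  induction m generalizing v with
  | zero =>
    simp only [descendants, Finset.mem_singleton, add_zero]
    constructor
    · rintro rfl
      exact ⟨rfl, hu, List.take_length⟩
    · rintro ⟨hlen, -, htake⟩
      rwa [← hlen, List.take_length] at htake
  | succ m ih =>
    simp only [descendants, Finset.mem_biUnion, Finset.mem_image, Finset.mem_range]
    constructor
    · rintro ⟨w, hw, j, hj, rfl⟩
      obtain ⟨hlen, hval, htake⟩ := ih.1 hw
      refine ⟨by simp [hlen]; omega, validFrom_append_singleton.2 ⟨hval, by simpa [hlen]⟩, ?_⟩
      rwa [List.take_append_of_le_length (by omega)]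
    · rintro ⟨hlen, hval, htake⟩
      obtain rfl | ⟨w, j, rfl⟩ := List.eq_nil_or_concat v
      · simp at hlen
      rw [List.concat_eq_append] at hlen hval htake ⊢
      obtain ⟨hw, hj⟩ := validFrom_append_singleton.1 hval
      simp only [List.length_append, List.length_singleton] at hlen
      rw [List.take_append_of_le_length (by omega)] at htake
      exact ⟨w, ih.2 ⟨by omega, hw, htake⟩, j, by simpa [show w.length = u.length + m by omega]
        using hj, rfl⟩

theorem mem_descendants_nil {k : ℕ} {v : List ℕ} :
    v ∈ M.descendants [] k ↔ v.length = k ∧ ValidFrom M.n 0 v := by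
  simp [M.mem_descendants (u := []) fun i hi => absurd hi (Nat.not_lt_zero i)]

theorem card_descendants {u : List ℕ} (hu : ValidFrom M.n 0 u) (m : ℕ) :
    (M.descendants u m).card = ∏ i ∈ Ico u.length (u.length + m), M.n i := by
  induction m with
  | zero => simp [descendants]
  | succ m ih =>
    rw [descendants, card_biUnion, sum_congr rfl fun v _ => Finset.card_image_of_injective _
      fun p q h => by simpa using h, sum_const, card_range, ih, smul_eq_mul,
      ← add_assoc, prod_Ico_succ_top (by omega), mul_comm]
    intro x hx y hy hxy
    refine disjoint_left.2 fun w hwx hwy => hxy ?_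
    simp only [Finset.mem_image] at hwx hwy
    obtain ⟨j, -, rfl⟩ := hwx
    obtain ⟨j', -, he⟩ := hwy
    have hlen := ((M.mem_descendants hu).1 hx).1.trans ((M.mem_descendants hu).1 hy).1.symm
    exact (List.append_inj he hlen.symm).1.symm

theorem moranSet_eq : M.moranSet = ⋂ k, ⋃ u ∈ M.descendants [] k, M.J u := by
  ext
  simp [moranSet, M.mem_descendants_nil]

theorem isCompact_moranSet : IsCompact M.moranSet := by
  refine (M.hcompact []).of_isClosed_subset ?_ ?_
  · rw [moranSet_eq]
    exact isClosed_iInter fun k => (M.descendants [] k).finite_toSet.isClosed_biUnion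
      fun u _ => (M.hcompact u).isClosed
  · intro x hx
    rw [moranSet_eq, mem_iInter] at hx
    simpa [descendants] using hx 0

theorem nonempty_moranSet_inter_J {u : List ℕ} (hu : ValidFrom M.n 0 u) :
    (M.moranSet ∩ M.J u).Nonempty := by
  have hpad := hu.append_replicate_zero M.n_pos
  have hanti : ∀ m, M.J (u ++ List.replicate (m + 1) 0) ⊆ M.J (u ++ List.replicate m 0) :=
    fun m => by
      rw [List.replicate_succ', ← List.append_assoc]
      exact M.hsubset _ 0 (hpad m) (M.n_pos _)
  obtain ⟨x, hx⟩ := IsCompact.nonempty_iInter_of_sequence_nonempty_isCompact_isClosed _ hanti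
    (fun m => M.J_nonempty (hpad m)) (M.hcompact _) fun m => (M.hcompact _).isClosed
  rw [mem_iInter] at hx
  have hxu : x ∈ M.J u := by simpa using hx 0
  refine ⟨x, ?_, hxu⟩
  rw [moranSet_eq, mem_iInter]
  intro k
  simp only [mem_iUnion, M.mem_descendants_nil, exists_prop]
  rcases le_or_gt k u.length with h | h
  · exact ⟨u.take k, ⟨by simp [h], hu.take k⟩, M.J_subset_take hu k hxu⟩
  · exact ⟨u ++ List.replicate (k - u.length) 0, ⟨by simp; omega, hpad _⟩, hx _⟩

theorem exists_ball_subset_J_nil : ∃ z ρ, 0 < ρ ∧ ball z ρ ⊆ M.J [] := by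
  obtain ⟨z, hz⟩ := M.hint
  obtain ⟨ρ, hρ, hball⟩ := Metric.isOpen_iff.1 isOpen_interior z hz
  exact ⟨z, ρ, hρ, hball.trans interior_subset⟩

theorem diam_J_nil_pos : 0 < diam (M.J []) := by
  obtain ⟨z, ρ, hρ, hball⟩ := M.exists_ball_subset_J_nil
  have : Nontrivial (EuclideanSpace ℝ (Fin d)) := by
    have : Nonempty (Fin d) := ⟨⟨0, M.one_le_dim⟩⟩
    infer_instance
  calc 0 < 2 * ρ := by positivity
    _ = diam (ball z ρ) := (diam_ball_eq z hρ.le).symm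
    _ ≤ diam (M.J []) := diam_mono hball (M.hcompact []).isBounded

lemma prod_n_eq_exp (k l : ℕ) :
    ∏ i ∈ Ico k l, (M.n i : ℝ) = exp (∑ i ∈ Ico k l, log (M.n i)) := by
  rw [← log_prod fun i _ => by exact_mod_cast (M.n_pos i).ne', exp_log (prod_pos fun i _ => by
    exact_mod_cast M.n_pos i)]

section EqualRatios

variable {cr : ℕ → ℝ} (hcr : ∀ k j, j < M.n k → M.c k j = cr k)

include hcr

lemma cr_mem_Ioo (k : ℕ) : cr k ∈ Ioo (0 : ℝ) 1 :=
  hcr k 0 (M.n_pos k) ▸ M.hc k 0 (M.n_pos k)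

lemma n_mul_cr_pow_le_one (k : ℕ) : (M.n k : ℝ) * cr k ^ d ≤ 1 := by
  have h := M.hsum k
  rwa [sum_congr rfl fun j hj => by rw [hcr k j (mem_range.1 hj)], sum_const, card_range,
    nsmul_eq_mul] at h

lemma levelScale_pos (k : ℕ) : 0 < levelScale cr k := prod_pos fun i _ => (M.cr_mem_Ioo hcr i).1

lemma levelScale_antitone : Antitone (levelScale cr) := fun k l h => by
  rw [← levelScale_mul_prod_Ico cr h]
  exact mul_le_of_le_one_right (M.levelScale_pos hcr k).le
    (prod_le_one (fun i _ => (M.cr_mem_Ioo hcr i).1.le) fun i _ => (M.cr_mem_Ioo hcr i).2.le)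

lemma levelScale_strictAnti : StrictAnti (levelScale cr) := strictAnti_nat_of_succ_lt fun k => by
  rw [levelScale, prod_range_succ]
  exact mul_lt_of_lt_one_right (M.levelScale_pos hcr k) (M.cr_mem_Ioo hcr k).2

lemma log_levelScale_div_levelScale {k l : ℕ} (h : k ≤ l) :
    log (levelScale cr k / levelScale cr l) = ∑ i ∈ Ico k l, -log (cr i) := by
  rw [← levelScale_mul_prod_Ico cr h, div_mul_cancel_left₀ (M.levelScale_pos hcr k).ne', log_inv,
    log_prod fun i _ => (M.cr_mem_Ioo hcr i).1.ne', sum_neg_distrib]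

lemma diam_J {u : List ℕ} (hu : ValidFrom M.n 0 u) :
    diam (M.J u) = levelScale cr u.length * diam (M.J []) := by
  induction u using List.reverseRecOn with
  | nil => simp [levelScale]
  | append_singleton w j ih =>
    obtain ⟨hw, hj⟩ := validFrom_append_singleton.1 hu
    rw [zero_add] at hj
    rw [M.hratio w j hw hj, hcr _ j hj, ih hw, List.length_append, List.length_singleton]
    simp only [levelScale, prod_range_succ]
    ring

lemma exists_ball_subset_J {z : EuclideanSpace ℝ (Fin d)} {ρ : ℝ} (hball : ball z ρ ⊆ M.J [])
    {u : List ℕ} (hu : ValidFrom M.n 0 u) : ∃ w, ball w (levelScale cr u.length * ρ) ⊆ M.J u := by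
  obtain ⟨f, r, hr, hf, hJ⟩ := M.hsimilar u hu
  have hscale : levelScale cr u.length ≤ r := by
    have := M.diam_J hcr hu
    rw [hJ] at this
    refine le_of_mul_le_mul_right ?_ M.diam_J_nil_pos
    rw [← this]
    exact diam_le_of_forall_dist_le (by positivity) <| by
      rintro _ ⟨x, hx, rfl⟩ _ ⟨y, hy, rfl⟩
      rw [hf]
      exact mul_le_mul_of_nonneg_left (dist_le_diam_of_mem (M.hcompact []).isBounded hx hy) hr.le
  refine ⟨f z, ?_⟩
  rcases le_or_gt ρ 0 with hρ | hρ
  · simp [ball_eq_empty.2 (mul_nonpos_of_nonneg_of_nonpos (M.levelScale_pos hcr _).le hρ)]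
  calc ball (f z) (levelScale cr u.length * ρ) ⊆ ball (f z) (r * ρ) :=
        ball_subset_ball (mul_le_mul_of_nonneg_right hscale hρ.le)
    _ ⊆ f '' ball z ρ := ball_subset_image_ball_of_dist_eq_mul hr hf z ρ
    _ ⊆ M.J u := hJ ▸ image_mono hball

lemma levelScale_div_levelScale_rpow {k l : ℕ} (hkl : k ≤ l) (s : ℝ) :
    (levelScale cr k / levelScale cr l) ^ s = exp (s * ∑ i ∈ Ico k l, -log (cr i)) := by
  rw [rpow_def_of_pos (div_pos (M.levelScale_pos hcr k) (M.levelScale_pos hcr l)),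
    M.log_levelScale_div_levelScale hcr hkl, mul_comm]

lemma log_two_div_le_neg_log_cr (i : ℕ) : log 2 / d ≤ -log (cr i) := by
  have hc := (M.cr_mem_Ioo hcr i).1
  have h2 : 2 * cr i ^ d ≤ 1 := le_trans (mul_le_mul_of_nonneg_right (by exact_mod_cast M.hn i)
    (by positivity)) (M.n_mul_cr_pow_le_one hcr i)
  have := log_le_log (by positivity) h2
  rw [log_mul two_ne_zero (by positivity), log_pow, log_one] at this
  rw [div_le_iff₀ (Nat.cast_pos.2 M.one_le_dim)]
  linarith

lemma tendsto_levelScale : Tendsto (levelScale cr) atTop (𝓝 0) :=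
  tendsto_levelScale_of_le_neg_log (div_pos (log_pos one_lt_two) (Nat.cast_pos.2 M.one_le_dim))
    (fun i => (M.cr_mem_Ioo hcr i).1) (M.log_two_div_le_neg_log_cr hcr)

lemma exists_levelScale_mul_le_lt {R : ℝ} (hR : 0 < R) (hRΔ : R < diam (M.J [])) :
    ∃ k, levelScale cr (k + 1) * diam (M.J []) ≤ R ∧ R < levelScale cr k * diam (M.J []) := by
  classical
  have hex : ∃ j, levelScale cr j * diam (M.J []) ≤ R :=
    (((M.tendsto_levelScale hcr).mul_const (diam (M.J []))).eventually
      (ge_mem_nhds (by simpa using hR))).exists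
  obtain ⟨k, hk⟩ : ∃ k, Nat.find hex = k + 1 := Nat.exists_eq_succ_of_ne_zero fun h => by
    have := Nat.find_spec hex
    rw [h] at this
    simp [levelScale] at this
    linarith
  exact ⟨k, hk ▸ Nat.find_spec hex, not_le.1 (Nat.find_min hex (by omega))⟩

section Counting

variable {z : EuclideanSpace ℝ (Fin d)} {ρ : ℝ} (hρ : 0 < ρ) (hball : ball z ρ ⊆ M.J [])

include hρ hball

lemma card_le_of_meets_closedBall {T : Finset (List ℕ)} {k : ℕ} {y : EuclideanSpace ℝ (Fin d)}
    {R κ : ℝ} (hR : 0 ≤ R) (hRκ : R ≤ κ * levelScale cr k)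
    (hT : ∀ u ∈ T, u.length = k ∧ ValidFrom M.n 0 u ∧ (M.J u ∩ closedBall y R).Nonempty) :
    (T.card : ℝ) ≤ ((κ + diam (M.J []) + ρ) / ρ) ^ d := by
  have hs := M.levelScale_pos hcr k
  choose! w hw using fun u (hu : ValidFrom M.n 0 u) => M.exists_ball_subset_J hcr hball hu
  have hpack := card_mul_pow_le_of_pairwiseDisjoint_interior (s := T) (V := M.J) (z := w) (y := y)
    (mul_pos hs hρ) (mul_nonneg hs.le diam_nonneg) hR
    (fun u hu v hv huv => M.disjoint_interior_J (hT u hu).2.1 (hT v hv).2.1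
      ((hT u hu).1.trans (hT v hv).1.symm) huv)
    (fun u hu => (hT u hu).1 ▸ hw u (hT u hu).2.1) (fun u hu => (hT u hu).2.2)
    (fun u hu => (M.hcompact u).isBounded)
    (fun u hu => ((M.diam_J hcr (hT u hu).2.1).trans (by rw [(hT u hu).1])).le)
  rw [finrank_euclideanSpace_fin] at hpack
  have hsum : R + levelScale cr k * diam (M.J []) + levelScale cr k * ρ
      ≤ levelScale cr k * (κ + diam (M.J []) + ρ) := by
    rw [mul_add, mul_add]; linarith
  have h := hpack.trans (pow_le_pow_left₀ (by positivity) hsum d)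
  rw [mul_pow, mul_pow, mul_left_comm] at h
  rw [div_pow, le_div_iff₀ (by positivity)]
  exact le_of_mul_le_mul_left h (pow_pos hs d)

/-- The cover uses one point of each level-`l` descendant of the level-`k` basic sets meeting
the ball. -/
theorem coverNum_le_mul_prod {r R κ : ℝ} {k l : ℕ} (hkl : k ≤ l)
    (hr : levelScale cr l * diam (M.J []) ≤ r) (hR : 0 ≤ R) (hRκ : R ≤ κ * levelScale cr k) :
    coverNum M.moranSet r R ≤ ⌈((κ + diam (M.J []) + ρ) / ρ) ^ d⌉₊ * ∏ i ∈ Ico k l, M.n i := by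
  classical
  choose! pt hpt using fun w (hw : ValidFrom M.n 0 w) => M.J_nonempty hw
  refine Nat.sInf_le fun x _ => ?_
  set T := (M.descendants [] k).filter fun u => (M.J u ∩ closedBall x R).Nonempty
  have hT : ∀ u ∈ T, u.length = k ∧ ValidFrom M.n 0 u ∧ (M.J u ∩ closedBall x R).Nonempty := by
    intro u hu
    rw [mem_filter, M.mem_descendants_nil] at hu
    exact ⟨hu.1.1, hu.1.2, hu.2⟩
  refine ⟨(T.biUnion fun u => M.descendants u (l - k)).image pt, ?_, ?_⟩
  · calc _ ≤ (T.biUnion fun u => M.descendants u (l - k)).card := card_image_le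
      _ ≤ ∑ u ∈ T, (M.descendants u (l - k)).card := card_biUnion_le
      _ = T.card * ∏ i ∈ Ico k l, M.n i := by
        rw [sum_congr rfl fun u hu => by rw [M.card_descendants (hT u hu).2.1, (hT u hu).1,
          Nat.add_sub_cancel' hkl], sum_const, smul_eq_mul]
      _ ≤ _ := Nat.mul_le_mul_right _ <| Nat.cast_le.1 <|
        (M.card_le_of_meets_closedBall hcr hρ hball hR hRκ hT).trans (Nat.le_ceil _)
  · rintro e ⟨heB, heE⟩
    rw [moranSet_eq, mem_iInter] at heE
    obtain ⟨w, hw, hew⟩ := mem_iUnion₂.1 (heE l)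
    rw [M.mem_descendants_nil] at hw
    have hwk := hw.2.take k
    have huT : w.take k ∈ T := mem_filter.2
      ⟨M.mem_descendants_nil.2 ⟨by simp [hw.1, hkl], hwk⟩, e, M.J_subset_take hw.2 k hew, heB⟩
    have hwD : w ∈ M.descendants (w.take k) (l - k) :=
      (M.mem_descendants hwk).2 ⟨by simp [hw.1]; omega, hw.2, by simp [hw.1, hkl]⟩
    refine mem_iUnion₂.2 ⟨pt w, mem_image_of_mem pt (mem_biUnion.2 ⟨_, huT, hwD⟩), ?_⟩
    calc dist e (pt w) ≤ diam (M.J w) :=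
          dist_le_diam_of_mem (M.hcompact w).isBounded hew (hpt w hw.2)
      _ = levelScale cr l * diam (M.J []) := by rw [M.diam_J hcr hw.2, hw.1]
      _ ≤ r := hr

/-- Every level-`l` descendant of a level-`k` basic set `J u` contains a point of `E` in the
`R`-ball around a point of `E ∩ J u`, and an `r`-ball catches boundedly many of them. -/
theorem prod_le_mul_coverNum {k l : ℕ} (hkl : k ≤ l) :
    ∏ i ∈ Ico k l, M.n i ≤ ⌈((diam (M.J []) + diam (M.J []) + ρ) / ρ) ^ d⌉₊ *
      coverNum M.moranSet (levelScale cr l * diam (M.J [])) (levelScale cr k * diam (M.J [])) := by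
  classical
  set Δ := diam (M.J [])
  set u := List.replicate k 0
  have hu : ValidFrom M.n 0 u := by
    simpa [u] using (show ValidFrom M.n 0 [] from fun i hi => absurd hi (Nat.not_lt_zero i)
      ).append_replicate_zero M.n_pos k
  obtain ⟨x, hxE, hxu⟩ := M.nonempty_moranSet_inter_J hu
  obtain ⟨t, htcard, htcover⟩ := exists_finset_card_le_coverNum M.isCompact_moranSet
    (mul_pos (M.levelScale_pos hcr l) M.diam_J_nil_pos) (levelScale cr k * Δ) hxE
  choose! p hpE hpJ using fun v (hv : ValidFrom M.n 0 v) => M.nonempty_moranSet_inter_J hv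
  set D := M.descendants u (l - k)
  have hD : ∀ v ∈ D, v.length = l ∧ ValidFrom M.n 0 v ∧ M.J v ⊆ M.J u := by
    intro v hv
    obtain ⟨hlen, hval, htake⟩ := (M.mem_descendants hu).1 hv
    exact ⟨by simp [u] at hlen; omega, hval, htake ▸ M.J_subset_take hval _⟩
  have hcov : ∀ v ∈ D, ∃ y ∈ t, p v ∈ closedBall y (levelScale cr l * Δ) := by
    intro v hv
    have hpx : dist (p v) x ≤ levelScale cr k * Δ := by
      calc dist (p v) x ≤ diam (M.J u) :=
            dist_le_diam_of_mem (M.hcompact u).isBounded ((hD v hv).2.2 (hpJ v (hD v hv).2.1)) hxu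
        _ = levelScale cr k * Δ := by rw [M.diam_J hcr hu, List.length_replicate]
    simpa using htcover ⟨mem_closedBall.2 hpx, hpE v (hD v hv).2.1⟩
  choose! f hft hfp using hcov
  have hcard := card_le_mul_card_image_of_maps_to hft ⌈((Δ + Δ + ρ) / ρ) ^ d⌉₊ fun y _ => by
    refine Nat.cast_le.1 ((M.card_le_of_meets_closedBall hcr hρ hball (y := y) (k := l) (κ := Δ)
      (mul_pos (M.levelScale_pos hcr l) M.diam_J_nil_pos).le (mul_comm _ _).le fun v hv => ?_).trans
      (Nat.le_ceil _))
    obtain ⟨hvD, rfl⟩ := mem_filter.1 hv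
    exact ⟨(hD v hvD).1, (hD v hvD).2.1, p v, hpJ v (hD v hvD).2.1, hfp v hvD⟩
  rw [M.card_descendants hu, List.length_replicate, Nat.add_sub_cancel' hkl] at hcard
  exact hcard.trans (Nat.mul_le_mul_left _ htcard)

end Counting

variable {cstar : ℝ} (hcstar : 0 < cstar) (hlb : ∀ k, cstar ≤ cr k)

include hcstar hlb

theorem ratioBounds :
    RatioBounds (fun i => log (M.n i)) (fun i => -log (cr i)) d (log 2 / d) (-log cstar) where
  τ₀_pos := div_pos (log_pos one_lt_two) (Nat.cast_pos.2 M.one_le_dim)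
  a_nonneg i := log_nonneg (by exact_mod_cast M.n_pos i)
  a_le i := by
    have hc := (M.cr_mem_Ioo hcr i).1
    have hn : (0 : ℝ) < M.n i := by exact_mod_cast M.n_pos i
    have := log_le_log (by positivity) (M.n_mul_cr_pow_le_one hcr i)
    rw [log_mul hn.ne' (by positivity), log_pow, log_one] at this
    linarith
  le_t := M.log_two_div_le_neg_log_cr hcr
  t_le i := by linarith [log_le_log hcstar (hlb i)]

omit hcstar in
lemma mul_levelScale_le_levelScale_succ (j : ℕ) :
    cstar * levelScale cr j ≤ levelScale cr (j + 1) := by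
  rw [show levelScale cr (j + 1) = levelScale cr j * cr j from prod_range_succ _ _, mul_comm]
  exact mul_le_mul_of_nonneg_left (hlb j) (M.levelScale_pos hcr j).le

lemma prod_n_le_exp_mul_rpow (m₀ : ℕ) {k l : ℕ} (hkl : k ≤ l) :
    ∏ i ∈ Ico k l, (M.n i : ℝ) ≤ exp (d * (m₀ + 1) * -log cstar) *
      (levelScale cr k / levelScale cr l) ^
        maxWindowRatio (fun i => log (M.n i)) (fun i => -log (cr i)) m₀ := by
  have := (M.ratioBounds hcr hcstar hlb).sum_a_le_maxWindowRatio_mul_add m₀ (l - k) k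
  rw [Nat.add_sub_cancel' hkl] at this
  rw [M.prod_n_eq_exp, M.levelScale_div_levelScale_rpow hcr hkl, ← exp_add]
  exact exp_le_exp.2 (by linarith)

lemma rpow_le_prod_n {k l : ℕ} (hkl : k < l) {s : ℝ}
    (hs : s ≤ windowRatio (fun i => log (M.n i)) (fun i => -log (cr i)) k l) :
    (levelScale cr k / levelScale cr l) ^ s ≤ ∏ i ∈ Ico k l, (M.n i : ℝ) := by
  rw [M.prod_n_eq_exp, M.levelScale_div_levelScale_rpow hcr hkl.le]
  exact exp_le_exp.2 <|
    (le_div_iff₀ ((M.ratioBounds hcr hcstar hlb).sum_t_pos hkl)).1 hs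

theorem coverNum_le_rpow (m₀ : ℕ) :
    ∃ C, 0 < C ∧ ∀ r R : ℝ, 0 < r → r < R → R < diam (M.J []) →
      (coverNum M.moranSet r R : ℝ) ≤
        C * (R / r) ^ maxWindowRatio (fun i => log (M.n i)) (fun i => -log (cr i)) m₀ := by
  obtain ⟨z, ρ, hρ, hball⟩ := M.exists_ball_subset_J_nil
  have H := M.ratioBounds hcr hcstar hlb
  set s := maxWindowRatio (fun i => log (M.n i)) (fun i => -log (cr i)) m₀
  set Δ := diam (M.J [])
  set P := ⌈((Δ / cstar + Δ + ρ) / ρ) ^ d⌉₊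
  set B := d * (m₀ + 1) * -log cstar
  have hΔ : 0 < Δ := M.diam_J_nil_pos
  have hP : 0 < P := Nat.ceil_pos.2 (by positivity)
  refine ⟨P * exp B * cstar⁻¹ ^ s, by positivity, fun r R hr hrR hRΔ => ?_⟩
  obtain ⟨k, hk, hRk⟩ := M.exists_levelScale_mul_le_lt hcr (hr.trans hrR) hRΔ
  obtain ⟨l, hl, hrl⟩ := M.exists_levelScale_mul_le_lt hcr hr (hrR.trans hRΔ)
  have hkl : k ≤ l := by
    by_contra! h
    have := M.levelScale_antitone hcr (Nat.succ_le_of_lt h)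
    nlinarith
  have hsucc := M.mul_levelScale_le_levelScale_succ hcr hlb
  have hcov := M.coverNum_le_mul_prod hcr hρ hball (κ := Δ / cstar) (Nat.succ_le_succ hkl) hl
    (hr.trans hrR).le (by
      rw [div_mul_eq_mul_div, le_div_iff₀ hcstar]
      nlinarith [hsucc k])
  have hX : levelScale cr (k + 1) / levelScale cr (l + 1) ≤ cstar⁻¹ * (R / r) := by
    have hden : cstar * r ≤ levelScale cr (l + 1) * Δ := calc
      cstar * r ≤ cstar * (levelScale cr l * Δ) := mul_le_mul_of_nonneg_left hrl.le hcstar.le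
      _ ≤ levelScale cr (l + 1) * Δ := by
        rw [← mul_assoc]
        exact mul_le_mul_of_nonneg_right (hsucc l) hΔ.le
    rw [← mul_div_mul_right _ _ hΔ.ne', inv_mul_eq_div, div_div]
    exact div_le_div₀ (hr.trans hrR).le hk (mul_pos hr hcstar) (mul_comm r cstar ▸ hden)
  have hN := M.prod_n_le_exp_mul_rpow hcr hcstar hlb m₀ (Nat.succ_le_succ hkl)
  calc (coverNum M.moranSet r R : ℝ) ≤ P * ∏ i ∈ Ico (k + 1) (l + 1), (M.n i : ℝ) := by
        exact_mod_cast hcov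
    _ ≤ P * (exp B * (cstar⁻¹ * (R / r)) ^ s) := by
        gcongr
        refine hN.trans (mul_le_mul_of_nonneg_left (rpow_le_rpow ?_ hX
          (H.maxWindowRatio_nonneg m₀)) (exp_pos B).le)
        exact (div_pos (M.levelScale_pos hcr _) (M.levelScale_pos hcr _)).le
    _ = P * exp B * cstar⁻¹ ^ s * (R / r) ^ s := by
        rw [mul_rpow (inv_pos.2 hcstar).le (div_pos (hr.trans hrR) hr).le]
        ring

theorem iInf_le_of_coverNum_le_rpow {α b C : ℝ} (hb : 0 < b) (hC : 0 < C)
    (hbound : ∀ r R : ℝ, 0 < r → r < R → R < b → (coverNum M.moranSet r R : ℝ) ≤ C * (R / r) ^ α) :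
    ⨅ m, maxWindowRatio (fun i => log (M.n i)) (fun i => -log (cr i)) m ≤ α := by
  obtain ⟨z, ρ, hρ, hball⟩ := M.exists_ball_subset_J_nil
  have H := M.ratioBounds hcr hcstar hlb
  set Δ := diam (M.J [])
  set Q := ⌈((Δ + Δ + ρ) / ρ) ^ d⌉₊
  have hΔ : 0 < Δ := M.diam_J_nil_pos
  have hQ : 0 < Q := Nat.ceil_pos.2 (by positivity)
  by_contra! hα
  obtain ⟨s, hαs, hs⟩ := exists_between hα
  obtain ⟨K, hK⟩ := eventually_atTop.1 <|
    ((M.tendsto_levelScale hcr).mul_const Δ).eventually (gt_mem_nhds (by simpa using hb))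
  obtain ⟨L, hL⟩ := exists_nat_gt (log (Q * C) / ((s - α) * (log 2 / d)))
  obtain ⟨k, l, hKk, hkl, hkls⟩ := H.exists_lt_windowRatio hs K (L + 1)
  set X := levelScale cr k / levelScale cr l
  have hX : X = levelScale cr k * Δ / (levelScale cr l * Δ) := (mul_div_mul_right _ _ hΔ.ne').symm
  have hlogX : (L + 1) * (log 2 / d) ≤ log X := by
    rw [M.log_levelScale_div_levelScale hcr (by omega)]
    exact le_trans (mul_le_mul_of_nonneg_right (by exact_mod_cast (by omega : L + 1 ≤ l - k))
      H.τ₀_pos.le) (H.mul_le_sum_t k l)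
  have hlow := M.rpow_le_prod_n hcr hcstar hlb (show k < l by omega) hkls.le
  have hup : ∏ i ∈ Ico k l, (M.n i : ℝ) ≤ Q * (C * X ^ α) := by
    have hcov := M.prod_le_mul_coverNum hcr hρ hball (show k ≤ l by omega)
    have := hbound _ _ (mul_pos (M.levelScale_pos hcr l) hΔ)
      (mul_lt_mul_of_pos_right (M.levelScale_strictAnti hcr (show k < l by omega)) hΔ) (hK k hKk)
    rw [← hX] at this
    calc (∏ i ∈ Ico k l, (M.n i : ℝ)) ≤ Q * (coverNum M.moranSet _ _ : ℝ) := by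
          exact_mod_cast hcov
      _ ≤ _ := mul_le_mul_of_nonneg_left this (Nat.cast_nonneg Q)
  have hXpos : 0 < X := div_pos (M.levelScale_pos hcr k) (M.levelScale_pos hcr l)
  have hgap : X ^ (s - α) ≤ Q * C := by
    rw [rpow_sub hXpos, div_le_iff₀ (rpow_pos_of_pos hXpos α)]
    linarith
  have hbig : Q * C < X ^ (s - α) := by
    rw [rpow_def_of_pos hXpos, ← log_lt_iff_lt_exp (by positivity)]
    rw [div_lt_iff₀ (mul_pos (sub_pos.2 hαs) H.τ₀_pos)] at hL
    nlinarith [mul_le_mul_of_nonneg_right hlogX (sub_pos.2 hαs).le,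
      mul_pos (sub_pos.2 hαs) H.τ₀_pos]
  linarith

theorem assouadDim_moranSet : assouadDim M.moranSet =
    ⨅ m, maxWindowRatio (fun i => log (M.n i)) (fun i => -log (cr i)) m := by
  have hmem : ∀ m, maxWindowRatio (fun i => log (M.n i)) (fun i => -log (cr i)) m ∈
      {α : ℝ | 0 ≤ α ∧ ∃ b C : ℝ, 0 < b ∧ 0 < C ∧ ∀ r R : ℝ, 0 < r → r < R → R < b →
        (coverNum M.moranSet r R : ℝ) ≤ C * (R / r) ^ α} := fun m => by
    obtain ⟨C, hC, hbound⟩ := M.coverNum_le_rpow hcr hcstar hlb m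
    exact ⟨(M.ratioBounds hcr hcstar hlb).maxWindowRatio_nonneg m, _, C, M.diam_J_nil_pos, hC,
      hbound⟩
  refine le_antisymm (le_ciInf fun m => csInf_le ⟨0, fun _ h => h.1⟩ (hmem m))
    (le_csInf ⟨_, hmem 0⟩ ?_)
  rintro α ⟨-, b, C, hb, hC, hbound⟩
  exact M.iInf_le_of_coverNum_le_rpow hcr hcstar hlb hb hC hbound

end EqualRatios

end MoranSystem

theorem stmt_12_general (d : ℕ) (M : MoranSystem d)
    (cr : ℕ → ℝ) (hcr : ∀ k j, j < M.n k → M.c k j = cr k)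
    (cstar : ℝ) (hcstar : 0 < cstar) (hlb : ∀ k, cstar ≤ cr k) :
    Filter.Tendsto
      (fun m : ℕ => ⨆ k : ℕ,
        Real.log (∏ i ∈ Finset.Icc k (k + m), (M.n i : ℝ)) /
          (-Real.log (∏ i ∈ Finset.Icc k (k + m), cr i)))
      Filter.atTop (nhds (assouadDim M.moranSet)) := by
  have hseq : (fun m : ℕ => ⨆ k : ℕ, log (∏ i ∈ Icc k (k + m), (M.n i : ℝ)) /
      -log (∏ i ∈ Icc k (k + m), cr i)) =
      maxWindowRatio (fun i => log (M.n i)) (fun i => -log (cr i)) := by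
    ext m
    refine iSup_congr fun k => ?_
    rw [windowRatio, ← Finset.Ico_add_one_right_eq_Icc,
      log_prod fun i _ => by exact_mod_cast (M.n_pos i).ne',
      log_prod fun i _ => (M.cr_mem_Ioo hcr i).1.ne', sum_neg_distrib]
  rw [hseq, M.assouadDim_moranSet hcr hcstar hlb]
  exact (M.ratioBounds hcr hcstar hlb).tendsto_maxWindowRatio

/-- for homogeneous Moran sets with equal ratios `c_k` at each level
and `inf_k c_k > 0`,
`dim_A E = lim_m sup_k log(n_k⋯n_{k+m}) / (−log(c_k⋯c_{k+m}))`. -/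
theorem stmt_12 (d : ℕ) (hd : 1 ≤ d) (M : MoranSystem d)
    (cr : ℕ → ℝ) (hcr : ∀ k j, j < M.n k → M.c k j = cr k)
    (cstar : ℝ) (hcstar : 0 < cstar) (hlb : ∀ k, cstar ≤ cr k) :
    Filter.Tendsto
      (fun m : ℕ => ⨆ k : ℕ,
        Real.log (∏ i ∈ Finset.Icc k (k + m), (M.n i : ℝ)) /
          (-Real.log (∏ i ∈ Finset.Icc k (k + m), cr i)))
      Filter.atTop (nhds (assouadDim M.moranSet)) :=
  stmt_12_general d M cr hcr cstar hcstar hlb
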